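/- Let ν > 0 and let M be a random variable taking values in the positive integers with lim_{x→∞} (log P[M > x]) / x = −α for some α > 0. Define the random variable N by P[N > n] = E[ (1 − M e^{−(M−1)ν}(1 − e^{−ν}) / (1 − e^{−Mν}) )^n ] for n ∈ ℕ. Then lim_{n→∞} (log P[N > n]) / (log n) = −α/ν. -/

import Mathlib

/-!
Write `p m` for the probability that a slot in which some of `m` users transmit is a success,
so that `P[N > n] = E[(1 - p M) ^ n]`. With `q = e^{-ν}` one has
`p m = m q^(m-1) / (1 + q + ⋯ + q^(m-1))`, hence `q^(m-1) ≤ p m ≤ m q^(m-1)`: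
`p m` decays like `e^{-ν m}` up to a polynomial factor.

Cut at `M = κ log n / ν`. If `κ < 1`, below the cut `n p M ≥ c n^(1-κ)`, so `(1 - p M)^n` is
smaller than any power of `n` there and `P[N > n]` is at most `P[M > κ log n / ν]` plus a
negligible term. If `κ > 1`, above the cut `n p M → 0` (after trading the polynomial factor for
a slightly smaller rate), so `(1 - p M)^n ≥ 1/2` there and `P[N > n] ≥ P[M > κ log n / ν] / 2`.
Since `P[M > x] = e^{-(α + o(1)) x}`, both bounds are `n^{-(α ± θ) κ / ν}`, and letting
`κ → 1`, `θ → 0` gives the exponent `-α / ν`.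
-/

open MeasureTheory Filter Real Asymptotics Topology Finset

/-- The conditional probability that a slot is a success, given that `m` users each transmit
with probability `1 - e^{-ν}` and at least one of them does. -/
noncomputable def successProb (ν : ℝ) (m : ℕ) : ℝ :=
  m * exp (-((m : ℝ) - 1) * ν) * (1 - exp (-ν)) / (1 - exp (-(m : ℝ) * ν))

section SuccessProb

variable {ν : ℝ} {m : ℕ}

theorem successProb_eq (hν : ν ≠ 0) (hm : 1 ≤ m) :
    successProb ν m = m * exp (-ν) ^ (m - 1) / ∑ i ∈ range m, exp (-ν) ^ i := by
  have hq : 1 - exp (-ν) ≠ 0 := by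
    rw [sub_ne_zero, ne_comm, Ne, exp_eq_one_iff, neg_eq_zero]; exact hν
  have hpred : exp (-((m : ℝ) - 1) * ν) = exp (-ν) ^ (m - 1) := by
    rw [← exp_nat_mul, Nat.cast_sub hm]; ring_nf
  have hpow : exp (-(m : ℝ) * ν) = exp (-ν) ^ m := by
    rw [← exp_nat_mul]; ring_nf
  rw [successProb, hpred, hpow, ← mul_neg_geom_sum, mul_comm (1 - exp (-ν)),
    mul_div_mul_right _ _ hq]

theorem geom_sum_exp_neg_pos (hm : 1 ≤ m) : 0 < ∑ i ∈ range m, exp (-ν) ^ i :=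
  sum_pos (fun i _ => by positivity) (nonempty_range_iff.2 (by omega))

theorem exp_neg_pow_sub_one (hm : 1 ≤ m) : exp (-ν) ^ (m - 1) = exp ν * exp (-ν * m) := by
  rw [← exp_nat_mul, ← exp_add, Nat.cast_sub hm]; ring_nf

theorem exp_mul_exp_neg_mul_le_successProb (hν : 0 < ν) (hm : 1 ≤ m) :
    exp ν * exp (-ν * m) ≤ successProb ν m := by
  have hq : exp (-ν) ≤ 1 := exp_le_one_iff.2 (by linarith)
  have hsum : ∑ i ∈ range m, exp (-ν) ^ i ≤ m := by
    simpa using sum_le_card_nsmul (range m) _ 1 (fun i _ => pow_le_one₀ (by positivity) hq)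
  rw [successProb_eq hν.ne' hm, le_div_iff₀ (geom_sum_exp_neg_pos hm), ← exp_neg_pow_sub_one hm,
    mul_comm]
  exact mul_le_mul_of_nonneg_right hsum (by positivity)

theorem successProb_le_one (hν : 0 < ν) (hm : 1 ≤ m) : successProb ν m ≤ 1 := by
  have hq : exp (-ν) ≤ 1 := exp_le_one_iff.2 (by linarith)
  rw [successProb_eq hν.ne' hm, div_le_one (geom_sum_exp_neg_pos hm)]
  simpa using card_nsmul_le_sum (range m) _ (exp (-ν) ^ (m - 1))
    (fun i hi => pow_le_pow_of_le_one (by positivity) hq (by simp at hi; omega))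

theorem successProb_le_mul_exp_neg_mul (hν : 0 < ν) (hm : 1 ≤ m) {ν' : ℝ} (hν' : ν' < ν) :
    successProb ν m ≤ exp ν * (ν - ν')⁻¹ * exp (-ν' * m) := by
  have hsum : 1 ≤ ∑ i ∈ range m, exp (-ν) ^ i := by
    simpa using single_le_sum (f := fun i => exp (-ν) ^ i) (fun i _ => by positivity)
      (mem_range.2 (by omega : 0 < m))
  calc successProb ν m ≤ m * exp (-ν) ^ (m - 1) := by
        rw [successProb_eq hν.ne' hm]
        exact div_le_self (by positivity) hsum
    _ = exp ν * (m * exp (-ν * m)) := by rw [exp_neg_pow_sub_one hm]; ring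
    _ ≤ exp ν * ((ν - ν')⁻¹ * exp ((ν - ν') * m) * exp (-ν * m)) := by
        gcongr
        exact le_inv_mul_exp _ (sub_pos.2 hν')
    _ = exp ν * (ν - ν')⁻¹ * exp (-ν' * m) := by
        rw [mul_assoc _ (exp _), ← exp_add]; ring_nf

end SuccessProb

theorem eventually_le_exp_of_tendsto_log_div {f : ℝ → ℝ} {α β : ℝ}
    (hf : Tendsto (fun x => log (f x) / x) atTop (𝓝 (-α))) (hβ : β < α) :
    ∀ᶠ x in atTop, f x ≤ exp (-β * x) := by
  filter_upwards [hf.eventually (gt_mem_nhds (neg_lt_neg hβ)), eventually_gt_atTop 0]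
    with x hlt hx
  rcases le_or_gt (f x) 0 with hf0 | hf0
  · exact hf0.trans (exp_pos _).le
  · rw [div_lt_iff₀ hx] at hlt
    exact (log_lt_iff_lt_exp hf0).1 hlt |>.le

theorem eventually_exp_le_of_tendsto_log_div {f : ℝ → ℝ} {α β : ℝ} (hf0 : ∀ x, 0 ≤ f x)
    (hα : 0 < α) (hf : Tendsto (fun x => log (f x) / x) atTop (𝓝 (-α))) (hβ : α < β) :
    ∀ᶠ x in atTop, exp (-β * x) ≤ f x := by
  filter_upwards [hf.eventually (lt_mem_nhds (neg_lt_neg hβ)),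
    hf.eventually (gt_mem_nhds (neg_neg_iff_pos.2 hα)), eventually_gt_atTop 0]
    with x hgt hneg hx
  -- `log 0 = 0`, so a negative `log (f x)` forces `f x > 0`.
  have hpos : 0 < f x := (hf0 x).lt_of_ne fun h => by simp [← h] at hneg
  rw [lt_div_iff₀ hx] at hgt
  exact ((lt_log_iff_exp_lt hpos).1 hgt).le

theorem tendsto_log_natCast_atTop : Tendsto (fun n : ℕ => log n) atTop atTop :=
  tendsto_log_atTop.comp tendsto_natCast_atTop_atTop

section PowerLaw

variable {a : ℕ → ℝ} {β b : ℝ}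

theorem eventually_log_div_log_lt_of_isBigO (h : a =O[atTop] fun n : ℕ => (n : ℝ) ^ (-β))
    (ha : ∀ᶠ n in atTop, a n ≠ 0) (hb : -β < b) :
    ∀ᶠ n in atTop, log (a n) / log n < b := by
  obtain ⟨C, hC, hCa⟩ := h.exists_pos
  have hlim : Tendsto (fun n : ℕ => log C / log n - β) atTop (𝓝 (-β)) := by
    simpa using (tendsto_const_nhds.div_atTop tendsto_log_natCast_atTop).sub_const β
  filter_upwards [hCa.bound, ha, hlim.eventually (gt_mem_nhds hb),
    tendsto_log_natCast_atTop.eventually_gt_atTop 0, eventually_gt_atTop 0]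
    with n hbound hne hlt hlog hn
  replace hn : (0 : ℝ) < n := Nat.cast_pos.2 hn
  rw [norm_of_nonneg (rpow_nonneg hn.le _), norm_eq_abs] at hbound
  have hlogle : log (a n) ≤ log C + -β * log n := by
    rw [← log_abs, ← log_rpow hn, ← log_mul hC.ne' (rpow_pos_of_pos hn _).ne']
    exact log_le_log (abs_pos.2 hne) hbound
  calc log (a n) / log n ≤ (log C + -β * log n) / log n := by gcongr
    _ = log C / log n - β := by field_simp; ring
    _ < b := hlt

theorem eventually_lt_log_div_log_of_isBigO (h : (fun n : ℕ => (n : ℝ) ^ (-β)) =O[atTop] a)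
    (hb : b < -β) : ∀ᶠ n in atTop, b < log (a n) / log n := by
  obtain ⟨C, hC, hCa⟩ := h.exists_pos
  have hlim : Tendsto (fun n : ℕ => -β - log C / log n) atTop (𝓝 (-β)) := by
    simpa using (tendsto_const_nhds.div_atTop tendsto_log_natCast_atTop).const_sub (-β)
  filter_upwards [hCa.bound, hlim.eventually (lt_mem_nhds hb),
    tendsto_log_natCast_atTop.eventually_gt_atTop 0, eventually_gt_atTop 0]
    with n hbound hlt hlog hn
  replace hn : (0 : ℝ) < n := Nat.cast_pos.2 hn
  rw [norm_of_nonneg (rpow_nonneg hn.le _), norm_eq_abs] at hbound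
  have hpos : 0 < |a n| := pos_of_mul_pos_right ((rpow_pos_of_pos hn _).trans_le hbound) hC.le
  have hlogle : -β * log n ≤ log C + log (a n) := by
    rw [← log_abs (a n), ← log_mul hC.ne' hpos.ne', ← log_rpow hn]
    exact log_le_log (rpow_pos_of_pos hn _) hbound
  calc b < -β - log C / log n := hlt
    _ = (-β * log n - log C) / log n := by field_simp
    _ ≤ log (a n) / log n := by gcongr; linarith

theorem tendsto_log_div_log_of_forall_isBigO {ι : Type*} {l : Filter ι} [l.NeBot] {γ : ℝ}
    {lo hi : ι → ℝ} (hlo : Tendsto lo l (𝓝 γ)) (hhi : Tendsto hi l (𝓝 γ))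
    (hup : ∀ᶠ i in l, a =O[atTop] fun n : ℕ => (n : ℝ) ^ (-lo i))
    (hlow : ∀ᶠ i in l, (fun n : ℕ => (n : ℝ) ^ (-hi i)) =O[atTop] a) :
    Tendsto (fun n : ℕ => log (a n) / log n) atTop (𝓝 (-γ)) := by
  obtain ⟨i₀, hi₀⟩ := hlow.exists
  have ha : ∀ᶠ n in atTop, a n ≠ 0 := by
    filter_upwards [hi₀.eq_zero_imp, eventually_gt_atTop 0] with n h hn ha
    exact (rpow_pos_of_pos (Nat.cast_pos.2 hn) _).ne' (h ha)
  refine tendsto_order.2 ⟨fun b hb => ?_, fun b hb => ?_⟩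
  · obtain ⟨i, hib, hi⟩ := ((hhi.eventually (gt_mem_nhds (lt_neg_of_lt_neg hb))).and hlow).exists
    exact eventually_lt_log_div_log_of_isBigO hi (lt_neg_of_lt_neg hib)
  · obtain ⟨i, hib, hi⟩ := ((hlo.eventually (lt_mem_nhds (neg_lt.1 hb))).and hup).exists
    exact eventually_log_div_log_lt_of_isBigO hi ha (neg_lt.1 hib)

end PowerLaw

theorem exp_neg_mul_rpow_isLittleO {c s : ℝ} (hc : 0 < c) (hs : 0 < s) (β : ℝ) :
    (fun n : ℕ => exp (-(c * (n : ℝ) ^ s))) =o[atTop] fun n : ℕ => (n : ℝ) ^ (-β) := by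
  refine ((isLittleO_exp_neg_mul_rpow_atTop hc (-β / s)).comp_tendsto
    ((tendsto_rpow_atTop hs).comp tendsto_natCast_atTop_atTop)).congr
    (fun n => by simp [neg_mul]) fun n => ?_
  simp only [Function.comp_apply]
  rw [← rpow_mul n.cast_nonneg, mul_div_cancel₀ _ hs.ne']

theorem exp_neg_mul_div_mul_log {n : ℝ} (hn : 0 < n) (a κ ν : ℝ) :
    exp (-a * (κ / ν * log n)) = n ^ (-(a * κ / ν)) := by
  rw [rpow_def_of_pos hn]; ring_nf

theorem mul_rpow_neg {n : ℝ} (hn : 0 < n) (κ : ℝ) : n * n ^ (-κ) = n ^ (1 - κ) := by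
  rw [sub_eq_add_neg, rpow_add hn, rpow_one]

section Probability

variable {Ω : Type*} {mΩ : MeasurableSpace Ω} {P : Measure Ω} [IsProbabilityMeasure P]
  {X S : Ω → ℝ} {ν α : ℝ}

theorem one_sub_pow_le_exp_neg_mul {s : ℝ} (hs : s ≤ 1) (n : ℕ) :
    (1 - s) ^ n ≤ exp (-(n * s)) := by
  rw [← mul_neg, exp_nat_mul]
  exact pow_le_pow_left₀ (sub_nonneg.2 hs) (one_sub_le_exp_neg s) n

theorem integrable_one_sub_pow (hS : Measurable S) (hS0 : ∀ ω, 0 ≤ S ω) (hS1 : ∀ ω, S ω ≤ 1)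
    (n : ℕ) : Integrable (fun ω => (1 - S ω) ^ n) P := by
  refine .of_bound (by fun_prop) 1 (.of_forall fun ω => ?_)
  rw [norm_of_nonneg (pow_nonneg (sub_nonneg.2 (hS1 ω)) n)]
  exact pow_le_one₀ (sub_nonneg.2 (hS1 ω)) (by linarith [hS0 ω])

theorem integral_one_sub_pow_le (hX : Measurable X) (hS : Measurable S) (hS0 : ∀ ω, 0 ≤ S ω)
    (hS1 : ∀ ω, S ω ≤ 1) {x t : ℝ} (hxt : ∀ ω, X ω ≤ x → t ≤ S ω) (n : ℕ) :
    ∫ ω, (1 - S ω) ^ n ∂P ≤ exp (-(n * t)) + P.real {ω | x < X ω} := by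
  have hset : MeasurableSet {ω | x < X ω} := measurableSet_lt measurable_const hX
  calc ∫ ω, (1 - S ω) ^ n ∂P
      ≤ ∫ ω, (exp (-(n * t)) + {ω | x < X ω}.indicator 1 ω) ∂P := by
        refine integral_mono (integrable_one_sub_pow hS hS0 hS1 n)
          ((integrable_const _).add ((integrable_const 1).indicator hset)) fun ω => ?_
        by_cases hω : x < X ω
        · rw [Set.indicator_of_mem (show ω ∈ {ω | x < X ω} from hω), Pi.one_apply]
          exact (pow_le_one₀ (sub_nonneg.2 (hS1 ω)) (by linarith [hS0 ω])).trans
            (le_add_of_nonneg_left (exp_pos _).le)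
        · rw [Set.indicator_of_notMem (show ω ∉ {ω | x < X ω} from hω), add_zero]
          refine (one_sub_pow_le_exp_neg_mul (hS1 ω) n).trans (exp_le_exp.2 ?_)
          have := hxt ω (not_lt.1 hω)
          nlinarith [(n.cast_nonneg : (0 : ℝ) ≤ n)]
    _ = exp (-(n * t)) + P.real {ω | x < X ω} := by
        rw [integral_add (integrable_const _) ((integrable_const 1).indicator hset),
          integral_const, integral_indicator_one hset]
        simp

theorem measureReal_mul_le_integral_one_sub_pow (hX : Measurable X) (hS : Measurable S)
    (hS0 : ∀ ω, 0 ≤ S ω) (hS1 : ∀ ω, S ω ≤ 1) {y t : ℝ} (ht : t ≤ 1)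
    (hyt : ∀ ω, y < X ω → S ω ≤ t) (n : ℕ) :
    P.real {ω | y < X ω} * (1 - t) ^ n ≤ ∫ ω, (1 - S ω) ^ n ∂P := by
  have hset : MeasurableSet {ω | y < X ω} := measurableSet_lt measurable_const hX
  rw [← smul_eq_mul, ← integral_indicator_const _ hset]
  refine integral_mono ((integrable_const _).indicator hset)
    (integrable_one_sub_pow hS hS0 hS1 n) fun ω => ?_
  by_cases hω : y < X ω
  · rw [Set.indicator_of_mem (show ω ∈ {ω | y < X ω} from hω)]
    exact pow_le_pow_left₀ (sub_nonneg.2 ht) (by linarith [hyt ω hω]) n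
  · rw [Set.indicator_of_notMem (show ω ∉ {ω | y < X ω} from hω)]
    exact pow_nonneg (sub_nonneg.2 (hS1 ω)) n

theorem integral_one_sub_pow_isBigO {a κ c : ℝ} (hν : 0 < ν) (hκ₀ : 0 < κ) (hκ₁ : κ < 1)
    (hc : 0 < c) (hX : Measurable X) (hS : Measurable S) (hS0 : ∀ ω, 0 ≤ S ω)
    (hS1 : ∀ ω, S ω ≤ 1) (hcS : ∀ ω, c * exp (-ν * X ω) ≤ S ω)
    (htail : Tendsto (fun x => log (P.real {ω | x < X ω}) / x) atTop (𝓝 (-α))) (ha : a < α) :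
    (fun n : ℕ => ∫ ω, (1 - S ω) ^ n ∂P) =O[atTop] fun n : ℕ => (n : ℝ) ^ (-(a * κ / ν)) := by
  set x : ℕ → ℝ := fun n => κ / ν * log n
  have hx : Tendsto x atTop atTop :=
    tendsto_log_natCast_atTop.const_mul_atTop (div_pos hκ₀ hν)
  have hbound : ∀ᶠ n : ℕ in atTop, ∫ ω, (1 - S ω) ^ n ∂P
      ≤ exp (-(c * (n : ℝ) ^ (1 - κ))) + (n : ℝ) ^ (-(a * κ / ν)) := by
    filter_upwards [hx.eventually (eventually_le_exp_of_tendsto_log_div htail ha),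
      eventually_gt_atTop 0] with n htailn hn
    have hn' : (0 : ℝ) < n := Nat.cast_pos.2 hn
    have hdecay : (n : ℝ) * (c * exp (-ν * x n)) = c * (n : ℝ) ^ (1 - κ) := by
      rw [exp_neg_mul_div_mul_log hn', mul_div_cancel_left₀ _ hν.ne', mul_left_comm,
        mul_rpow_neg hn']
    calc ∫ ω, (1 - S ω) ^ n ∂P
        ≤ exp (-(n * (c * exp (-ν * x n)))) + P.real {ω | x n < X ω} := by
          refine integral_one_sub_pow_le hX hS hS0 hS1 (fun ω hω => ?_) n
          exact (mul_le_mul_of_nonneg_left (exp_le_exp.2 (by nlinarith)) hc.le).trans (hcS ω)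
      _ ≤ _ := by
          rw [hdecay]
          gcongr
          rwa [exp_neg_mul_div_mul_log hn'] at htailn
  have hsum : (fun n : ℕ => exp (-(c * (n : ℝ) ^ (1 - κ))) + (n : ℝ) ^ (-(a * κ / ν)))
      =O[atTop] fun n : ℕ => (n : ℝ) ^ (-(a * κ / ν)) :=
    (exp_neg_mul_rpow_isLittleO hc (by linarith) _).isBigO.add (isBigO_refl _ _)
  refine (IsBigO.of_bound' ?_).trans hsum
  filter_upwards [hbound] with n hn
  rw [norm_of_nonneg (integral_nonneg fun ω => pow_nonneg (sub_nonneg.2 (hS1 ω)) n),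
    norm_of_nonneg (by positivity)]
  exact hn

theorem isBigO_integral_one_sub_pow {a κ C : ℝ} (hν : 0 < ν) (hκ : 1 < κ) (hC : 0 ≤ C)
    (hX : Measurable X) (hS : Measurable S) (hS0 : ∀ ω, 0 ≤ S ω) (hS1 : ∀ ω, S ω ≤ 1)
    (hSC : ∀ ω, S ω ≤ C * exp (-ν * X ω)) (hα : 0 < α)
    (htail : Tendsto (fun x => log (P.real {ω | x < X ω}) / x) atTop (𝓝 (-α))) (ha : α < a) :
    (fun n : ℕ => (n : ℝ) ^ (-(a * κ / ν))) =O[atTop] fun n : ℕ => ∫ ω, (1 - S ω) ^ n ∂P := by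
  set y : ℕ → ℝ := fun n => κ / ν * log n
  have hy : Tendsto y atTop atTop :=
    tendsto_log_natCast_atTop.const_mul_atTop (div_pos (by linarith) hν)
  have hsmall : Tendsto (fun n : ℕ => C * (n : ℝ) ^ (1 - κ)) atTop (𝓝 0) := by
    have h := ((tendsto_rpow_neg_atTop (y := κ - 1) (by linarith)).comp
      tendsto_natCast_atTop_atTop).const_mul C
    rw [mul_zero] at h
    exact h.congr fun n => by rw [Function.comp_apply, neg_sub]
  refine IsBigO.of_bound 2 ?_
  filter_upwards [hy.eventually (eventually_exp_le_of_tendsto_log_div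
      (fun _ => measureReal_nonneg) hα htail ha),
    hsmall.eventually (ge_mem_nhds (by norm_num : (0 : ℝ) < 1 / 2)),
    eventually_gt_atTop 0] with n htailn hsmalln hn
  have hn' : (0 : ℝ) < n := Nat.cast_pos.2 hn
  set t := C * exp (-ν * y n) with ht_def
  have hnt : n * t ≤ 1 / 2 := by
    rwa [ht_def, exp_neg_mul_div_mul_log hn', mul_div_cancel_left₀ _ hν.ne', mul_left_comm,
      mul_rpow_neg hn']
  have ht : t ≤ 1 := by
    have : t ≤ n * t := le_mul_of_one_le_left (by positivity) (by exact_mod_cast hn)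
    linarith
  have hbern : 1 / 2 ≤ (1 - t) ^ n := by
    have := one_add_mul_le_pow (a := -t) (by linarith) n
    rw [← sub_eq_add_neg] at this
    linarith
  rw [norm_of_nonneg (by positivity),
    norm_of_nonneg (integral_nonneg fun ω => pow_nonneg (sub_nonneg.2 (hS1 ω)) n)]
  calc (n : ℝ) ^ (-(a * κ / ν)) = 2 * ((n : ℝ) ^ (-(a * κ / ν)) * (1 / 2)) := by ring
    _ ≤ 2 * (P.real {ω | y n < X ω} * (1 - t) ^ n) := by
        gcongr
        rwa [exp_neg_mul_div_mul_log hn'] at htailn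
    _ ≤ 2 * ∫ ω, (1 - S ω) ^ n ∂P := by
        gcongr
        refine measureReal_mul_le_integral_one_sub_pow hX hS hS0 hS1 ht (fun ω hω => ?_) n
        exact (hSC ω).trans (mul_le_mul_of_nonneg_left (exp_le_exp.2 (by nlinarith)) hC)

theorem tendsto_log_integral_one_sub_pow_div_log (hν : 0 < ν) (hα : 0 < α)
    (hX : Measurable X) (hS : Measurable S) (hS1 : ∀ ω, S ω ≤ 1)
    (htail : Tendsto (fun x => log (P.real {ω | x < X ω}) / x) atTop (𝓝 (-α)))
    (hlow : ∃ c > 0, ∀ ω, c * exp (-ν * X ω) ≤ S ω)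
    (hup : ∀ ν' < ν, ∃ C, 0 ≤ C ∧ ∀ ω, S ω ≤ C * exp (-ν' * X ω)) :
    Tendsto (fun n : ℕ => log (∫ ω, (1 - S ω) ^ n ∂P) / log n) atTop (𝓝 (-(α / ν))) := by
  obtain ⟨c, hc, hcS⟩ := hlow
  have hS0 : ∀ ω, 0 ≤ S ω := fun ω => (by positivity : 0 ≤ c * exp (-ν * X ω)).trans (hcS ω)
  have hhi : ContinuousAt (fun θ => (α + θ) * (1 + θ) / (ν - θ)) 0 :=
    ContinuousAt.div (by fun_prop) (by fun_prop) (by simpa using hν.ne')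
  refine tendsto_log_div_log_of_forall_isBigO (l := 𝓝[>] 0)
    (lo := fun θ => (α - θ) * (1 - θ) / ν) (hi := fun θ => (α + θ) * (1 + θ) / (ν - θ))
    ?_ ?_ ?_ ?_
  · have hlo : Continuous fun θ : ℝ => (α - θ) * (1 - θ) / ν := by fun_prop
    exact tendsto_nhdsWithin_of_tendsto_nhds (hlo.tendsto' 0 _ (by simp))
  · simpa using tendsto_nhdsWithin_of_tendsto_nhds hhi.tendsto
  · filter_upwards [Ioo_mem_nhdsGT one_pos] with θ ⟨hθ₀, hθ₁⟩
    exact integral_one_sub_pow_isBigO hν (by linarith) (by linarith) hc hX hS hS0 hS1 hcS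
      htail (by linarith)
  · filter_upwards [Ioo_mem_nhdsGT hν] with θ ⟨hθ₀, hθν⟩
    obtain ⟨C, hC, hSC⟩ := hup (ν - θ) (by linarith)
    exact isBigO_integral_one_sub_pow (by linarith) (by linarith) hC hX hS hS0 hS1 hSC hα
      htail (by linarith)

end Probability

/-- Theorem 5 (N-part, eq. (32)): in slotted ALOHA with a random number `M` of backlogged
users having an asymptotically exponential tail of rate `α`, the number of collision slots
`N` with `P[N > n] = E[(1 - M e^{-(M-1)ν}(1-e^{-ν})/(1-e^{-Mν}))^n]` has a power law tail
of index `α/ν`. -/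
theorem stmt9 {Ω : Type*} {mΩ : MeasurableSpace Ω} (P : Measure Ω) [IsProbabilityMeasure P]
    (ν α : ℝ) (hν : 0 < ν) (hα : 0 < α)
    (M : Ω → ℕ) (hMm : Measurable M) (hMpos : ∀ ω, 1 ≤ M ω)
    (htail : Tendsto (fun x : ℝ => Real.log (P {ω | (M ω : ℝ) > x}).toReal / x) atTop
      (nhds (-α))) :
    Tendsto (fun n : ℕ =>
        Real.log (∫ ω,
            (1 - (M ω : ℝ) * Real.exp (-((M ω : ℝ) - 1) * ν) * (1 - Real.exp (-ν)) /
              (1 - Real.exp (-(M ω : ℝ) * ν))) ^ n ∂P)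
          / Real.log n) atTop (nhds (-(α / ν))) :=
  tendsto_log_integral_one_sub_pow_div_log (X := fun ω => (M ω : ℝ))
    (S := fun ω => successProb ν (M ω)) hν hα (measurable_from_nat.comp hMm)
    ((measurable_from_nat (f := successProb ν)).comp hMm)
    (fun ω => successProb_le_one hν (hMpos ω)) htail
    ⟨exp ν, exp_pos ν, fun ω => exp_mul_exp_neg_mul_le_successProb hν (hMpos ω)⟩
    fun _ hν' => ⟨_, by positivity, fun ω => successProb_le_mul_exp_neg_mul hν (hMpos ω) hν'⟩
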